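/- With $A_p = \sqrt{2}\left(\frac{\Gamma((p+1)/2)}{\sqrt{\pi}}\right)^{1/p}$, the sequence $X_m := A_{\frac{2m}{m+2}}^{-m/2}$ converges to $\frac{e^{1-\gamma/2}}{\sqrt{2}}$ as $m \to \infty$, where $\gamma$ is the Euler--Mascheroni constant. -/

import Mathlib

/-!
With `h = 2 / (m + 2)` one has `p = 2 - 2h`, `(p + 1) / 2 = 3/2 - h` and `-(m/2) / p = -1 / (2h)`, so
`log X_m = (log 2) / 2 + (1/2) · (log Γ(3/2 - h) - log Γ(3/2)) / (-h)`.
This is a difference quotient of `log Γ` at `3/2`; it tends to `ψ(3/2) = 2 - γ - 2 log 2`, obtained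
from the known value of `Γ'(1/2)` through `Γ(x + 1) = x Γ(x)`.
-/

open Real Filter

noncomputable def khinchineA (p : ℝ) : ℝ :=
  Real.sqrt 2 * (Real.Gamma ((p + 1) / 2) / Real.sqrt π) ^ (1 / p)

open Topology

namespace Real

theorem Gamma_three_halves : Gamma (3 / 2) = √π / 2 := by
  rw [show (3 / 2 : ℝ) = 1 / 2 + 1 by norm_num, Gamma_add_one (by norm_num), Gamma_one_half_eq]
  ring

theorem hasDerivAt_Gamma_add_one {x d : ℝ} (hx : x ≠ 0) (h : HasDerivAt Gamma d x) :
    HasDerivAt Gamma (Gamma x + x * d) (x + 1) := by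
  have h' : HasDerivAt Gamma d (x + 1 - 1) := by rwa [add_sub_cancel_right]
  have hrec : HasDerivAt (fun y => (y - 1) * Gamma (y - 1)) (1 * Gamma x + x * d) (x + 1) := by
    simpa using ((hasDerivAt_id' (x + 1)).sub_const 1).fun_mul h'.comp_sub_const
  have hfun : (fun y => (y - 1) * Gamma (y - 1)) =ᶠ[𝓝 (x + 1)] Gamma := by
    filter_upwards [isOpen_ne.mem_nhds (by simpa using hx : x + 1 ≠ 1)] with y hy
    rw [← Gamma_add_one (sub_ne_zero.mpr hy), sub_add_cancel]
  simpa using hrec.congr_of_eventuallyEq hfun.symm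

theorem hasDerivAt_log_Gamma_three_halves :
    HasDerivAt (fun x => log (Gamma x)) (2 - eulerMascheroniConstant - 2 * log 2) (3 / 2) := by
  have hΓ := hasDerivAt_Gamma_add_one (by norm_num) hasDerivAt_Gamma_one_half
  rw [show (1 / 2 : ℝ) + 1 = 3 / 2 by norm_num] at hΓ
  convert hΓ.log (Gamma_pos_of_pos (by norm_num)).ne' using 1
  have hπ : √π ≠ 0 := (sqrt_pos.mpr pi_pos).ne'
  rw [Gamma_three_halves, Gamma_one_half_eq]
  field_simp
  ring

end Real

theorem khinchineA_pos {p : ℝ} (hp : -1 < p) : 0 < khinchineA p := by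
  unfold khinchineA
  have := Real.Gamma_pos_of_pos (by linarith : 0 < (p + 1) / 2)
  positivity

theorem log_khinchineA_rpow {m : ℝ} (hm : 0 < m) :
    log (khinchineA (2 * m / (m + 2)) ^ (-(m / 2))) =
      log 2 / 2 + slope (fun x => log (Gamma x)) (3 / 2) (3 / 2 - 2 / (m + 2)) / 2 := by
  have hp : (2 * m / (m + 2) + 1) / 2 = 3 / 2 - 2 / (m + 2) := by field_simp; ring
  have hx : 0 < 3 / 2 - 2 / (m + 2) := hp ▸ by positivity
  have hΓ := Gamma_pos_of_pos hx
  have hπ : 0 < √π := sqrt_pos.mpr pi_pos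
  rw [log_rpow (khinchineA_pos (neg_one_lt_zero.trans (by positivity))), khinchineA, hp,
    log_mul (by positivity) (rpow_pos_of_pos (div_pos hΓ hπ) _).ne', log_rpow (div_pos hΓ hπ),
    log_div hΓ.ne' hπ.ne', slope_def_field, Gamma_three_halves, log_div hπ.ne' two_ne_zero,
    log_sqrt zero_le_two, log_sqrt pi_pos.le]
  field_simp
  ring

theorem tendsto_three_halves_sub_two_div :
    Tendsto (fun m : ℕ => 3 / 2 - 2 / ((m : ℝ) + 2)) atTop (𝓝[≠] (3 / 2)) := by
  have h : Tendsto (fun m : ℕ => 2 / ((m : ℝ) + 2)) atTop (𝓝 0) :=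
    tendsto_const_nhds.div_atTop (tendsto_atTop_add_const_right _ 2 tendsto_natCast_atTop_atTop)
  refine tendsto_nhdsWithin_of_tendsto_nhds_of_eventually_within _ ?_ (.of_forall fun m => ?_)
  · simpa using tendsto_const_nhds.sub h
  · simp only [Set.mem_compl_iff, Set.mem_singleton_iff, sub_eq_self]
    positivity

theorem khinchineA_seq_tendsto :
    Tendsto (fun m : ℕ => khinchineA (2 * (m : ℝ) / ((m : ℝ) + 2)) ^ (-((m : ℝ) / 2)))
      atTop (nhds (Real.exp (1 - Real.eulerMascheroniConstant / 2) / Real.sqrt 2)) := by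
  have hslope := (hasDerivAt_iff_tendsto_slope.mp hasDerivAt_log_Gamma_three_halves).comp
    tendsto_three_halves_sub_two_div
  have hlog := (tendsto_const_nhds (x := log 2 / 2)).add (hslope.div_const 2)
  have hlim : exp (log 2 / 2 + (2 - eulerMascheroniConstant - 2 * log 2) / 2) =
      exp (1 - eulerMascheroniConstant / 2) / √2 := by
    rw [sqrt_eq_rpow, rpow_def_of_pos two_pos, ← exp_sub]
    ring_nf
  rw [← hlim]
  refine ((continuous_exp.tendsto _).comp hlog).congr' ?_
  filter_upwards [eventually_gt_atTop 0] with m hm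
  rw [Function.comp_apply, Function.comp_apply, ← log_khinchineA_rpow (by positivity),
    exp_log (rpow_pos_of_pos (khinchineA_pos (neg_one_lt_zero.trans (by positivity))) _)]
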